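/- arXiv:1304.1688 — 4 statements merged into one kernel-verified Lean document; each statement's English description precedes it below -/
import Mathlib

section
/- Multidimensional integration by parts: let g, φ : ℝᵈ → ℝ be d-times continuously differentiable with g (or φ) vanishing at infinity together with all its derivatives sufficiently fast for the boundary terms at +∞ to vanish. Then for all y ∈ ℝᵈ: ∫_{z ≥ y} (∂ᵈ g/∂z₁⋯∂z_d)(z) φ(z) dz = (−1)ᵈ Σ_{I ⊆ {1,…,d}} ∫_{z_I ≥ y_I} g(y_{Ī}, z_I) (∂^{|I|} φ/∂z_I)(y_{Ī}, z_I) dz_I, where the sum runs over all subsets I of {1,…,d}, (y_{Ī}, z_I) denotes the vector whose I-coordinates are taken from z and remaining coordinates from y, and the I = ∅ term is g(y)φ(y). -/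
/-!
Write `S_I F (y) = ∫_{z_I ≥ y_I} F(y_Ī, z_I) dz_I`. By Fubini, `S_{I ∪ {j}}` is `S_I` followed by
(or preceded by) the one-dimensional integral over `t ≥ y_j` of the function with `y_j := t`.
Induct on the set `J` of differentiated coordinates. For `j ∉ J`, peel the `t`-integral off
`S_{J ∪ {j}}` and apply the induction hypothesis to `∂_j g` at the moved base point; this gives a
sum over `I ⊆ J`. In each summand, move the `t`-integral back inside and integrate by parts in `t`:
compact support of `g` kills the boundary term at `+∞`, and the two remaining terms are the
`I`- and the `(I ∪ {j})`-summands of the identity for `J ∪ {j}`, with the sign flipped.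
-/

open MeasureTheory Filter Topology

/-- The partial derivative in the `i`-th coordinate direction. -/
noncomputable def pd {d : ℕ} (i : Fin d) (f : (Fin d → ℝ) → ℝ) : (Fin d → ℝ) → ℝ :=
  fun x => fderiv ℝ f x (Pi.single i 1)

/-- Iterated mixed partial derivative along a list of coordinates. -/
noncomputable def mpartialList {d : ℕ} : List (Fin d) → ((Fin d → ℝ) → ℝ) → (Fin d → ℝ) → ℝ
  | [], f => f
  | i :: l, f => mpartialList l (pd i f)

/-- Mixed partial derivative `∂^{|I|}/∂z_I`, once in each coordinate of `I`. -/
noncomputable def mpartial {d : ℕ} (I : Finset (Fin d)) (f : (Fin d → ℝ) → ℝ) :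
    (Fin d → ℝ) → ℝ :=
  mpartialList I.toList f

/-- The vector `(y_{Ī}, z_I)`: coordinates in `I` taken from `z`, the rest from `y`. -/
noncomputable def combine {d : ℕ} (y : Fin d → ℝ) (I : Finset (Fin d))
    (z : {i // i ∈ I} → ℝ) : Fin d → ℝ :=
  fun i => if h : i ∈ I then z ⟨i, h⟩ else y i

open Function Set

section MixedPartials

variable {d : ℕ} {f : (Fin d → ℝ) → ℝ}

lemma contDiff_pd {n : ℕ} (i : Fin d) (hf : ContDiff ℝ (n + 1 : ℕ) f) :
    ContDiff ℝ n (pd i f) :=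
  (hf.fderiv_right (by norm_cast)).clm_apply contDiff_const

lemma HasCompactSupport.pd (i : Fin d) (hf : HasCompactSupport f) : HasCompactSupport (pd i f) :=
  hf.fderiv_apply ℝ _

lemma pd_pd_eq_fderiv_fderiv (hf : ContDiff ℝ 2 f) (a b : Fin d) (x : Fin d → ℝ) :
    pd a (pd b f) x = fderiv ℝ (fderiv ℝ f) x (Pi.single a 1) (Pi.single b 1) := by
  have hdf : DifferentiableAt ℝ (fderiv ℝ f) x :=
    (hf.fderiv_right (m := 1) (by norm_num)).differentiable one_ne_zero x
  have := (ContinuousLinearMap.apply ℝ ℝ (Pi.single b (1 : ℝ))).hasFDerivAt.comp x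
    hdf.hasFDerivAt
  rw [pd, show pd b f = ContinuousLinearMap.apply ℝ ℝ (Pi.single b (1 : ℝ)) ∘ fderiv ℝ f from rfl,
    this.fderiv]
  rfl

lemma pd_comm (hf : ContDiff ℝ 2 f) (a b : Fin d) : pd a (pd b f) = pd b (pd a f) := by
  funext x
  rw [pd_pd_eq_fderiv_fderiv hf, pd_pd_eq_fderiv_fderiv hf,
    (hf.contDiffAt.isSymmSndFDerivAt (by simp)).eq]

lemma contDiff_mpartialList {n : ℕ} :
    ∀ (l : List (Fin d)) {f : (Fin d → ℝ) → ℝ},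
      ContDiff ℝ (n + l.length : ℕ) f → ContDiff ℝ n (mpartialList l f)
  | [], _, hf => hf
  | i :: l, _, hf => contDiff_mpartialList l (contDiff_pd i hf)

lemma HasCompactSupport.mpartialList :
    ∀ (l : List (Fin d)) {f : (Fin d → ℝ) → ℝ},
      HasCompactSupport f → HasCompactSupport (mpartialList l f)
  | [], _, hf => hf
  | i :: l, _, hf => HasCompactSupport.mpartialList l (hf.pd i)

lemma mpartialList_perm {l l' : List (Fin d)} (h : l.Perm l') :
    ∀ {f : (Fin d → ℝ) → ℝ}, ContDiff ℝ l.length f → mpartialList l f = mpartialList l' f := by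
  induction h with
  | nil => exact fun _ => rfl
  | cons i _ ih => exact fun hf => ih (contDiff_pd (n := _) i hf)
  | swap a b l =>
    intro f hf
    exact congrArg (mpartialList l) (pd_comm (hf.of_le (by norm_cast; simp)) a b)
  | trans h₁ _ ih₁ ih₂ => exact fun hf => (ih₁ hf).trans (ih₂ (h₁.length_eq ▸ hf))

lemma mpartialList_append_singleton :
    ∀ (l : List (Fin d)) (j : Fin d) (f : (Fin d → ℝ) → ℝ),
      mpartialList (l ++ [j]) f = pd j (mpartialList l f)
  | [], _, _ => rfl
  | i :: l, j, f => mpartialList_append_singleton l j (pd i f)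

lemma contDiff_mpartial {n : ℕ} {I : Finset (Fin d)} (hf : ContDiff ℝ (n + I.card : ℕ) f) :
    ContDiff ℝ n (mpartial I f) :=
  contDiff_mpartialList I.toList (by rwa [Finset.length_toList])

lemma HasCompactSupport.mpartial (I : Finset (Fin d)) (hf : HasCompactSupport f) :
    HasCompactSupport (mpartial I f) :=
  hf.mpartialList I.toList

lemma mpartial_empty (f : (Fin d → ℝ) → ℝ) : mpartial ∅ f = f := by
  rw [mpartial, Finset.toList_empty]
  rfl

variable {I : Finset (Fin d)} {j : Fin d}

lemma mpartial_insert (hj : j ∉ I) (hf : ContDiff ℝ (I.card + 1 : ℕ) f) :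
    mpartial (insert j I) f = mpartial I (pd j f) :=
  mpartialList_perm (Finset.toList_insert hj)
    (by rwa [Finset.length_toList, Finset.card_insert_of_notMem hj])

lemma mpartial_insert_eq_pd (hj : j ∉ I) (hf : ContDiff ℝ (I.card + 1 : ℕ) f) :
    mpartial (insert j I) f = pd j (mpartial I f) := by
  rw [mpartial, mpartial, ← mpartialList_append_singleton]
  exact mpartialList_perm ((Finset.toList_insert hj).trans (List.perm_append_singleton j _).symm)
    (by rwa [Finset.length_toList, Finset.card_insert_of_notMem hj])

end MixedPartials

section Octant

variable {ι : Type*}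

def octant (s : Finset ι) (y : ι → ℝ) : Set (s → ℝ) := {z | ∀ i : s, y i ≤ z i}

lemma measurableSet_octant (s : Finset ι) (y : ι → ℝ) : MeasurableSet (octant s y) :=
  measurableSet_Ici (a := fun i : s => y i)

lemma preimage_piUnique_symm_octant (y : ι → ℝ) (j : ι) :
    (MeasurableEquiv.piUnique fun _ : ({j} : Finset ι) => ℝ).symm ⁻¹' octant {j} y
      = Ici (y j) := by
  ext t
  simp [octant]

variable [DecidableEq ι]

lemma continuous_updateFinset (y : ι → ℝ) (s : Finset ι) : Continuous (updateFinset y s) := by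
  refine continuous_pi fun i => ?_
  by_cases hi : i ∈ s
  · simpa [updateFinset, hi] using continuous_apply (⟨i, hi⟩ : s)
  · simpa [updateFinset, hi] using continuous_const

lemma isClosedEmbedding_updateFinset (y : ι → ℝ) (s : Finset ι) :
    IsClosedEmbedding (updateFinset y s) :=
  LeftInverse.isClosedEmbedding (restrict_updateFinset y) (Finset.continuous_restrict s)
    (continuous_updateFinset y s)

lemma integrable_comp_updateFinset {F : (ι → ℝ) → ℝ} (hF : Continuous F)
    (hFc : HasCompactSupport F) (y : ι → ℝ) (s : Finset ι) :
    Integrable (fun z => F (updateFinset y s z)) :=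
  (hF.comp (continuous_updateFinset y s)).integrable_of_hasCompactSupport
    (hFc.comp_isClosedEmbedding (isClosedEmbedding_updateFinset y s))

lemma octant_updateFinset_of_disjoint {s t : Finset ι} (hst : Disjoint s t) (y : ι → ℝ)
    (w : s → ℝ) : octant t (updateFinset y s w) = octant t y := by
  ext z
  refine forall_congr' fun i => ?_
  rw [updateFinset, dif_neg (Finset.disjoint_right.mp hst i.2)]

lemma preimage_piFinsetUnion_octant {s t : Finset ι} (hst : Disjoint s t) (y : ι → ℝ) :
    MeasurableEquiv.piFinsetUnion (fun _ => ℝ) hst ⁻¹' octant (s ∪ t) y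
      = octant s y ×ˢ octant t y := by
  ext ⟨w, z⟩
  change (∀ i, _ ≤ Equiv.piFinsetUnion (fun _ => ℝ) hst (w, z) i) ↔ _
  simp only [mem_prod, octant, mem_ofPred_eq]
  refine ⟨fun h => ⟨fun i => ?_, fun i => ?_⟩, fun ⟨hw, hz⟩ ⟨i, hi⟩ => ?_⟩
  · simpa [Equiv.piFinsetUnion_left _ hst i.2] using h ⟨i, Finset.mem_union_left t i.2⟩
  · simpa [Equiv.piFinsetUnion_right _ hst i.2] using h ⟨i, Finset.mem_union_right s i.2⟩
  · rcases Finset.mem_union.mp hi with his | hit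
    · simpa [Equiv.piFinsetUnion_left _ hst his] using hw ⟨i, his⟩
    · simpa [Equiv.piFinsetUnion_right _ hst hit] using hz ⟨i, hit⟩

lemma updateFinset_piFinsetUnion {s t : Finset ι} (hst : Disjoint s t) (y : ι → ℝ)
    (p : (s → ℝ) × (t → ℝ)) :
    updateFinset y (s ∪ t) (MeasurableEquiv.piFinsetUnion (fun _ => ℝ) hst p)
      = updateFinset (updateFinset y s p.1) t p.2 :=
  (updateFinset_updateFinset hst).symm

lemma integrable_comp_updateFinset_updateFinset {s t : Finset ι} (hst : Disjoint s t)
    {F : (ι → ℝ) → ℝ} (hF : Continuous F) (hFc : HasCompactSupport F) (y : ι → ℝ) :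
    Integrable (fun p : (s → ℝ) × (t → ℝ) => F (updateFinset (updateFinset y s p.1) t p.2)) := by
  have he := volume_preserving_piFinsetUnion (fun _ : ι => ℝ) hst
  refine ((he.integrable_comp_emb (MeasurableEquiv.measurableEmbedding _)).mpr
    (integrable_comp_updateFinset hF hFc y (s ∪ t))).congr (ae_of_all _ fun p => ?_)
  simp only [comp_apply, updateFinset_piFinsetUnion]

/-- The paper's `∫_{z_s ≥ y_s} F(y_{s̄}, z_s) dz_s`; `updateFinset y s z` is definitionally
`combine y s z`. -/
noncomputable def octantIntegral (s : Finset ι) (F : (ι → ℝ) → ℝ) (y : ι → ℝ) : ℝ :=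
  ∫ z in octant s y, F (updateFinset y s z)

variable {s t : Finset ι} {F : (ι → ℝ) → ℝ}

theorem octantIntegral_union (hst : Disjoint s t) (hF : Continuous F) (hFc : HasCompactSupport F)
    (y : ι → ℝ) :
    octantIntegral (s ∪ t) F y = ∫ w in octant s y, octantIntegral t F (updateFinset y s w) := by
  have he := volume_preserving_piFinsetUnion (fun _ : ι => ℝ) hst
  rw [octantIntegral, ← he.setIntegral_preimage_emb (MeasurableEquiv.measurableEmbedding _),
    preimage_piFinsetUnion_octant, Measure.volume_eq_prod]
  simp only [updateFinset_piFinsetUnion]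
  rw [setIntegral_prod _ (integrable_comp_updateFinset_updateFinset hst hF hFc y).integrableOn]
  refine setIntegral_congr_fun (measurableSet_octant s y) fun w _ => ?_
  rw [octantIntegral, octant_updateFinset_of_disjoint hst]

theorem integrableOn_octantIntegral_union (hst : Disjoint s t) (hF : Continuous F)
    (hFc : HasCompactSupport F) (y : ι → ℝ) :
    IntegrableOn (fun w => octantIntegral t F (updateFinset y s w)) (octant s y) := by
  have := (integrable_comp_updateFinset_updateFinset hst hF hFc y).restrict
    (s := octant s y ×ˢ octant t y)
  rw [Measure.volume_eq_prod, ← Measure.prod_restrict] at this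
  simp only [octantIntegral, octant_updateFinset_of_disjoint hst]
  exact this.integral_prod_left

lemma updateFinset_piUnique_symm (y : ι → ℝ) (j : ι) (t : ℝ) :
    updateFinset y {j} ((MeasurableEquiv.piUnique fun _ : ({j} : Finset ι) => ℝ).symm t)
      = update y j t := by
  rw [updateFinset_singleton]
  rfl

lemma octantIntegral_singleton (j : ι) (G : (ι → ℝ) → ℝ) (y : ι → ℝ) :
    octantIntegral {j} G y = ∫ t in Ici (y j), G (update y j t) := by
  have he : MeasurePreserving (MeasurableEquiv.piUnique fun _ : ({j} : Finset ι) => ℝ).symm :=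
    (measurePreserving_piUnique fun _ => volume).symm
  rw [octantIntegral, ← he.setIntegral_preimage_emb (MeasurableEquiv.measurableEmbedding _),
    preimage_piUnique_symm_octant]
  simp only [updateFinset_piUnique_symm]

lemma integrableOn_octant_singleton_iff {j : ι} {G : (ι → ℝ) → ℝ} {y : ι → ℝ} :
    IntegrableOn (fun w => G (updateFinset y {j} w)) (octant {j} y)
      ↔ IntegrableOn (fun t => G (update y j t)) (Ici (y j)) := by
  have he : MeasurePreserving (MeasurableEquiv.piUnique fun _ : ({j} : Finset ι) => ℝ).symm :=
    (measurePreserving_piUnique fun _ => volume).symm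
  rw [← he.integrableOn_comp_preimage (MeasurableEquiv.measurableEmbedding _),
    preimage_piUnique_symm_octant]
  simp only [comp_def, updateFinset_piUnique_symm]

theorem octantIntegral_insert {j : ι} (hj : j ∉ s) (hF : Continuous F)
    (hFc : HasCompactSupport F) (y : ι → ℝ) :
    octantIntegral (insert j s) F y = ∫ t in Ici (y j), octantIntegral s F (update y j t) := by
  rw [Finset.insert_eq, octantIntegral_union (Finset.disjoint_singleton_left.mpr hj) hF hFc]
  exact octantIntegral_singleton j (octantIntegral s F) y

theorem octantIntegral_insert' {j : ι} (hj : j ∉ s) (hF : Continuous F)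
    (hFc : HasCompactSupport F) (y : ι → ℝ) :
    octantIntegral (insert j s) F y = octantIntegral s (octantIntegral {j} F) y := by
  rw [Finset.insert_eq, Finset.union_comm,
    octantIntegral_union (Finset.disjoint_singleton_right.mpr hj) hF hFc]
  rfl

theorem integrableOn_octantIntegral_update {j : ι} (hj : j ∉ s) (hF : Continuous F)
    (hFc : HasCompactSupport F) (y : ι → ℝ) :
    IntegrableOn (fun t => octantIntegral s F (update y j t)) (Ici (y j)) :=
  integrableOn_octant_singleton_iff.mp
    (integrableOn_octantIntegral_union (Finset.disjoint_singleton_left.mpr hj) hF hFc y)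

lemma octantIntegral_univ [Fintype ι] (F : (ι → ℝ) → ℝ) (y : ι → ℝ) :
    octantIntegral Finset.univ F y = ∫ z in {z : ι → ℝ | ∀ i, y i ≤ z i}, F z := by
  let e := MeasurableEquiv.piCongrLeft (fun _ : ι => ℝ) (Equiv.subtypeUnivEquiv Finset.mem_univ)
  have he : MeasurePreserving e := measurePreserving_piCongrLeft (fun _ : ι => volume) _
  have hez : ∀ z, e z = updateFinset y Finset.univ z := fun z => by
    ext i
    rw [updateFinset_univ_apply, MeasurableEquiv.coe_piCongrLeft]
    exact Equiv.piCongrLeft_apply_apply (fun _ => ℝ) _ z ⟨i, Finset.mem_univ i⟩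
  have hpre : e ⁻¹' {z | ∀ i, y i ≤ z i} = octant Finset.univ y := by
    ext z
    simp only [mem_preimage, mem_ofPred_eq, hez, updateFinset_univ_apply, octant]
    exact ⟨fun h i => h i, fun h i => h ⟨i, Finset.mem_univ i⟩⟩
  rw [← he.setIntegral_preimage_emb (MeasurableEquiv.measurableEmbedding _), hpre]
  simp only [hez]
  rfl

end Octant

section IntegrationByParts

variable {d : ℕ} {g ψ : (Fin d → ℝ) → ℝ}

lemma hasDerivAt_comp_update (hg : Differentiable ℝ g) (x : Fin d → ℝ) (j : Fin d) (t : ℝ) :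
    HasDerivAt (fun t => g (update x j t)) (pd j g (update x j t)) t :=
  (hg _).hasFDerivAt.comp_hasDerivAt t (hasDerivAt_update x j t)

theorem octantIntegral_singleton_pd_mul (hg : ContDiff ℝ 1 g) (hψ : ContDiff ℝ 1 ψ)
    (hgc : HasCompactSupport g) (j : Fin d) (x : Fin d → ℝ) :
    octantIntegral {j} (pd j g * ψ) x = -(g x * ψ x) - octantIntegral {j} (g * pd j ψ) x := by
  have hline := isClosedEmbedding_update x j
  have hg' : Continuous (pd j g) := (contDiff_pd (n := 0) j hg).continuous
  have hψ' : Continuous (pd j ψ) := (contDiff_pd (n := 0) j hψ).continuous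
  have key := integral_Ioi_mul_deriv_eq_deriv_mul (a := x j) (b' := 0)
    (u := ψ ∘ update x j) (v := g ∘ update x j)
    (fun t _ => hasDerivAt_comp_update (hψ.differentiable one_ne_zero) x j t)
    (fun t _ => hasDerivAt_comp_update (hg.differentiable one_ne_zero) x j t)
    (((hψ.continuous.mul hg').comp hline.continuous).integrable_of_hasCompactSupport
      (((hgc.pd j).mul_left).comp_isClosedEmbedding hline)).integrableOn
    (((hψ'.mul hg.continuous).comp hline.continuous).integrable_of_hasCompactSupport
      ((hgc.mul_left).comp_isClosedEmbedding hline)).integrableOn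
    ((hψ.continuous.mul hg.continuous).comp hline.continuous).continuousWithinAt.tendsto
    (((hgc.mul_left (f := ψ)).comp_isClosedEmbedding hline).is_zero_at_infty.mono_left
      atTop_le_cocompact)
  rw [octantIntegral_singleton, octantIntegral_singleton, integral_Ici_eq_integral_Ioi,
    integral_Ici_eq_integral_Ioi]
  simp only [Pi.mul_apply, comp_apply, update_eq_self, mul_comm (ψ _), mul_comm (pd j ψ _)]
    at key ⊢
  linarith

theorem integral_octantIntegral_update_pd_mul {s : Finset (Fin d)} {j : Fin d} (hj : j ∉ s)
    (hg : ContDiff ℝ 1 g) (hψ : ContDiff ℝ 1 ψ) (hgc : HasCompactSupport g) (y : Fin d → ℝ) :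
    ∫ t in Ici (y j), octantIntegral s (pd j g * ψ) (update y j t)
      = -octantIntegral s (g * ψ) y - octantIntegral (insert j s) (g * pd j ψ) y := by
  have hg' : Continuous (pd j g) := (contDiff_pd (n := 0) j hg).continuous
  have hψ' : Continuous (pd j ψ) := (contDiff_pd (n := 0) j hψ).continuous
  have hgψ' : Continuous (g * pd j ψ) := hg.continuous.mul hψ'
  rw [← octantIntegral_insert hj (hg'.mul hψ.continuous) (hgc.pd j).mul_right,
    octantIntegral_insert' hj (hg'.mul hψ.continuous) (hgc.pd j).mul_right,
    octantIntegral_insert' hj hgψ' hgc.mul_right,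
    funext (octantIntegral_singleton_pd_mul hg hψ hgc j), octantIntegral, octantIntegral,
    octantIntegral]
  have hgψ : IntegrableOn (fun z => -(g (updateFinset y s z) * ψ (updateFinset y s z)))
      (octant s y) :=
    (integrable_comp_updateFinset (hg.continuous.mul hψ.continuous) hgc.mul_right y
      s).neg.integrableOn
  rw [integral_sub hgψ (integrableOn_octantIntegral_union (Finset.disjoint_singleton_right.mpr hj)
    hgψ' hgc.mul_right y), integral_neg]
  rfl

end IntegrationByParts

theorem octantIntegral_mpartial_mul {d : ℕ} (J : Finset (Fin d)) {g φ : (Fin d → ℝ) → ℝ}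
    (hg : ContDiff ℝ J.card g) (hφ : ContDiff ℝ J.card φ) (hgc : HasCompactSupport g)
    (y : Fin d → ℝ) :
    octantIntegral J (mpartial J g * φ) y
      = (-1) ^ J.card * ∑ I ∈ J.powerset, octantIntegral I (g * mpartial I φ) y := by
  induction J using Finset.induction_on generalizing g y with
  | empty => simp [mpartial_empty]
  | @insert j J hj ih =>
    rw [Finset.card_insert_of_notMem hj] at hg hφ ⊢
    have hφJ : ContDiff ℝ J.card φ := hφ.of_le (by norm_cast; omega)
    have hφI : ∀ I ∈ J.powerset, ContDiff ℝ (I.card + 1 : ℕ) φ := fun I hI =>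
      hφ.of_le (by have := Finset.card_le_card (Finset.mem_powerset.mp hI); norm_cast; omega)
    have hC1 : ∀ I ∈ J.powerset, ContDiff ℝ 1 (mpartial I φ) := fun I hI =>
      contDiff_mpartial (by rw [add_comm]; exact hφI I hI)
    have hjI : ∀ I ∈ J.powerset, j ∉ I := fun I hI hjI => hj (Finset.mem_powerset.mp hI hjI)
    calc octantIntegral (insert j J) (mpartial (insert j J) g * φ) y
        = ∫ t in Ici (y j), octantIntegral J (mpartial J (pd j g) * φ) (update y j t) := by
          rw [mpartial_insert hj hg, octantIntegral_insert hj
            ((contDiff_mpartial (n := 0) (by rw [zero_add]; exact contDiff_pd j hg)).continuous.mul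
              hφ.continuous) ((hgc.pd j).mpartial J).mul_right]
      _ = ∫ t in Ici (y j), (-1) ^ J.card *
            ∑ I ∈ J.powerset, octantIntegral I (pd j g * mpartial I φ) (update y j t) := by
          simp only [ih (contDiff_pd j hg) hφJ (hgc.pd j)]
      _ = (-1) ^ J.card * ∑ I ∈ J.powerset,
            ∫ t in Ici (y j), octantIntegral I (pd j g * mpartial I φ) (update y j t) := by
          rw [integral_const_mul, integral_finsetSum _ fun I hI =>
            integrableOn_octantIntegral_update (hjI I hI)
              ((contDiff_pd (n := 0) j (hg.of_le (by norm_cast; omega))).continuous.mul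
                (hC1 I hI).continuous) (hgc.pd j).mul_right y]
      _ = (-1) ^ J.card * ∑ I ∈ J.powerset, (-octantIntegral I (g * mpartial I φ) y
            - octantIntegral (insert j I) (g * mpartial (insert j I) φ) y) := by
          congr 1
          refine Finset.sum_congr rfl fun I hI => ?_
          rw [integral_octantIntegral_update_pd_mul (hjI I hI) (hg.of_le (by norm_cast; omega))
            (hC1 I hI) hgc y, mpartial_insert_eq_pd (hjI I hI) (hφI I hI)]
      _ = (-1) ^ (J.card + 1) *
            ∑ I ∈ (insert j J).powerset, octantIntegral I (g * mpartial I φ) y := by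
          rw [Finset.sum_powerset_insert hj, Finset.sum_sub_distrib, Finset.sum_neg_distrib,
            pow_succ]
          ring

/-- multidimensional integration by parts over the Pareto octant `{z ≥ y}`:
`∫_{z ≥ y} ∂ᵈg/∂z₁⋯∂z_d (z) φ(z) dz
  = (−1)ᵈ Σ_{I ⊆ {1,…,d}} ∫_{z_I ≥ y_I} g(y_{Ī}, z_I) ∂^{|I|}φ/∂z_I (y_{Ī}, z_I) dz_I`,
for `g, φ` `d`-times continuously differentiable with `g` vanishing at infinity together with
all its derivatives fast enough (here: compactly supported), so the boundary terms at `+∞`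
vanish. The `I = ∅` term is `g(y) φ(y)`. -/
theorem stmt7 {d : ℕ} (g φ : (Fin d → ℝ) → ℝ)
    (hgd : ContDiff ℝ d g) (hφd : ContDiff ℝ d φ) (hgc : HasCompactSupport g)
    (y : Fin d → ℝ) :
    (∫ z in {z : Fin d → ℝ | ∀ i, y i ≤ z i}, mpartial Finset.univ g z * φ z) =
      (-1 : ℝ) ^ d *
        ∑ I ∈ (Finset.univ : Finset (Fin d)).powerset,
          ∫ z in {z : {i // i ∈ I} → ℝ | ∀ i, y i.1 ≤ z i},
            g (combine y I z) * mpartial I φ (combine y I z) := by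
  have h := octantIntegral_mpartial_mul Finset.univ (by rwa [Finset.card_fin])
    (by rwa [Finset.card_fin]) hgc y
  rw [Finset.card_univ, Fintype.card_fin] at h
  exact (octantIntegral_univ (mpartial Finset.univ g * φ) y).symm.trans h
end

section
/- Let L be the first-order operator Lφ(x) = Σ_j b_j(x_j) ∂φ/∂x_j on ℝᵈ where each coefficient b_j ∈ C¹(ℝ) depends only on the coordinate x_j. Let q be a smooth compactly supported density and g(y) = ∫_{z ≥ y} q(z) dz. Then the Pareto-dual operator L^D g := F(L'(F⁻¹g)), where F⁻¹g = (−1)ᵈ ∂ᵈg/∂y₁⋯∂y_d and L'q = −Σ_j ∂(b_j q)/∂x_j, satisfies L^D g(y) = −Σ_j b_j(y_j) ∂g/∂y_j (y); i.e., the Pareto dual of the deterministic drift is the drift in the opposite direction. -/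
open MeasureTheory Filter Topology Set

section helpers

/-- Translation of a Pareto-corner integral to the positive orthant. -/
lemma pareto_shift {d : ℕ} (h : (Fin d → ℝ) → ℝ) (y : Fin d → ℝ) :
    ∫ z in {z : Fin d → ℝ | ∀ i, y i ≤ z i}, h z
      = ∫ w in {w : Fin d → ℝ | ∀ i, 0 ≤ w i}, h (y + w) := by
  have hmp : MeasurePreserving (fun w : Fin d → ℝ => y + w) volume volume :=
    measurePreserving_add_left volume y
  have hemb : MeasurableEmbedding (fun w : Fin d → ℝ => y + w) :=
    (Homeomorph.addLeft y).measurableEmbedding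
  have := hmp.setIntegral_preimage_emb hemb h {z : Fin d → ℝ | ∀ i, y i ≤ z i}
  rw [← this]
  congr 1
  ext w
  simp [le_add_iff_nonneg_right]

/-- Decomposition of an inserted point along a coordinate line. -/
lemma insert_decomp {n : ℕ} (j : Fin (n+1)) (y : Fin (n+1) → ℝ) (v : Fin n → ℝ) (t : ℝ) :
    y + (j.insertNth t v : Fin (n+1) → ℝ)
      = (y + (j.insertNth 0 v : Fin (n+1) → ℝ)) + t • (Pi.single j 1 : Fin (n+1) → ℝ) := by
  funext i
  refine j.succAboveCases ?_ ?_ i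
  · simp [Fin.insertNth_apply_same, Pi.single_eq_same]
  · intro k
    simp [Fin.insertNth_apply_succAbove, Pi.single_eq_of_ne (Fin.succAbove_ne j k)]

lemma cont_insert {n : ℕ} (j : Fin (n+1)) :
    Continuous (fun p : ℝ × (Fin n → ℝ) => (j.insertNth p.1 p.2 : Fin (n+1) → ℝ)) := by
  refine continuous_pi fun i => ?_
  refine j.succAboveCases ?_ ?_ i
  · simpa [Fin.insertNth_apply_same] using
      (continuous_fst : Continuous fun p : ℝ × (Fin n → ℝ) => p.1)
  · intro k
    simpa [Fin.insertNth_apply_succAbove] using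
      (show Continuous fun p : ℝ × (Fin n → ℝ) => p.2 k from
        (continuous_apply k).comp (continuous_snd : Continuous fun p : ℝ × (Fin n → ℝ) => p.2))

/-- `Fin.insertNthEquiv` as a homeomorphism. -/
def insertHomeo {n : ℕ} (j : Fin (n+1)) : (ℝ × (Fin n → ℝ)) ≃ₜ (Fin (n+1) → ℝ) where
  toEquiv := Fin.insertNthEquiv (fun _ => ℝ) j
  continuous_toFun := by
    have h := cont_insert j
    simpa [Fin.insertNthEquiv] using h
  continuous_invFun := by
    simp only [Fin.insertNthEquiv]
    exact (continuous_apply j).prodMk (continuous_pi fun k => continuous_apply _)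

/-- Fundamental theorem of calculus along a coordinate half-line, for a compactly
supported `C¹` function. -/
lemma line_integral {n : ℕ} (f : (Fin (n+1) → ℝ) → ℝ) (hf : ContDiff ℝ 1 f)
    (hfc : HasCompactSupport f) (j : Fin (n+1)) (c : Fin (n+1) → ℝ) :
    ∫ t in Ici (0:ℝ), fderiv ℝ f (c + t • (Pi.single j 1 : Fin (n+1) → ℝ)) ((Pi.single j 1 : Fin (n+1) → ℝ)) = - f c := by
  set u : Fin (n+1) → ℝ := (Pi.single j 1 : Fin (n+1) → ℝ) with hu
  set φ : ℝ → ℝ := fun t => f (c + t • u) with hφ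
  set ψ : ℝ → ℝ := fun t => fderiv ℝ f (c + t • u) u with hψ
  have hline : ∀ t : ℝ, HasDerivAt (fun s : ℝ => c + s • u) u t := by
    intro t
    have h1 : HasDerivAt (fun s : ℝ => s • u) ((1:ℝ) • u) t :=
      (hasDerivAt_id t).smul_const u
    rw [one_smul] at h1
    exact h1.const_add c
  have hder : ∀ t : ℝ, HasDerivAt φ (ψ t) t := by
    intro t
    have hfd : HasFDerivAt f (fderiv ℝ f (c + t • u)) (c + t • u) :=
      (hf.differentiable one_ne_zero (c + t • u)).hasFDerivAt
    exact hfd.comp_hasDerivAt t (hline t)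
  have hcontψ : Continuous ψ := by
    have h1 : Continuous fun t : ℝ => c + t • u := by continuity
    exact ((hf.continuous_fderiv one_ne_zero).comp h1).clm_apply continuous_const
  obtain ⟨R, hR⟩ := (hfc.fderiv (𝕜 := ℝ)).isBounded.subset_closedBall 0
  obtain ⟨R₂, hR₂⟩ := hfc.isBounded.subset_closedBall 0
  set R' : ℝ := max (max R R₂) 0 with hR'
  have hR'0 : 0 ≤ R' := le_max_right _ _
  have hRsub : tsupport (fderiv ℝ f) ⊆ Metric.closedBall 0 R' :=
    hR.trans (Metric.closedBall_subset_closedBall ((le_max_left R R₂).trans (le_max_left _ _)))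
  have hR₂sub : tsupport f ⊆ Metric.closedBall 0 R' :=
    hR₂.trans (Metric.closedBall_subset_closedBall ((le_max_right R R₂).trans (le_max_left _ _)))
  set M : ℝ := R' + ‖c‖ with hM
  have hM0 : 0 ≤ M := by have := norm_nonneg c; simp [hM]; linarith
  have hcoord : ∀ t : ℝ, (c + t • u) j = c j + t := by
    intro t; simp [hu, Pi.single_eq_same]
  have hbig : ∀ t : ℝ, M < |t| → R' < ‖c + t • u‖ := by
    intro t ht
    have h1 : |c j + t| ≤ ‖c + t • u‖ := by
      have h := norm_le_pi_norm (c + t • u) j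
      simpa [hcoord t, Real.norm_eq_abs] using h
    have h2 : |t| - |c j| ≤ |c j + t| := by
      have h := abs_sub_abs_le_abs_sub t (-(c j))
      rw [abs_neg, sub_neg_eq_add, add_comm] at h
      exact h
    have h3 : |c j| ≤ ‖c‖ := by
      simpa [Real.norm_eq_abs] using norm_le_pi_norm c j
    simp only [hM] at ht
    linarith
  have hψ0 : ∀ t : ℝ, M < |t| → ψ t = 0 := by
    intro t ht
    have hnot : (c + t • u) ∉ tsupport (fderiv ℝ f) := by
      intro hmem
      have h := hRsub hmem
      rw [Metric.mem_closedBall, dist_zero_right] at h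
      exact absurd h (not_le.2 (hbig t ht))
    simp [hψ, image_eq_zero_of_notMem_tsupport hnot]
  have hφ0 : ∀ t : ℝ, M < |t| → φ t = 0 := by
    intro t ht
    have hnot : (c + t • u) ∉ tsupport f := by
      intro hmem
      have h := hR₂sub hmem
      rw [Metric.mem_closedBall, dist_zero_right] at h
      exact absurd h (not_le.2 (hbig t ht))
    simp [hφ, image_eq_zero_of_notMem_tsupport hnot]
  have habs : ∀ t : ℝ, t ∉ Icc (-(M+1)) (M+1) → M < |t| := by
    intro t ht
    simp only [mem_Icc, not_and_or, not_le] at ht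
    rcases ht with h | h
    · rw [abs_of_neg (by linarith)]; linarith
    · rw [abs_of_pos (by linarith)]; linarith
  have hψcs : HasCompactSupport ψ := by
    apply HasCompactSupport.intro (isCompact_Icc (a := -(M+1)) (b := M+1))
    intro t ht
    exact hψ0 t (habs t ht)
  have hint : IntegrableOn ψ (Ioi (0:ℝ)) volume :=
    (hcontψ.integrable_of_hasCompactSupport hψcs).integrableOn
  have htend : Tendsto φ atTop (𝓝 0) := by
    have hev : φ =ᶠ[atTop] fun _ => 0 := by
      filter_upwards [eventually_gt_atTop M] with t ht
      exact hφ0 t (by rw [abs_of_pos (lt_of_le_of_lt hM0 ht)]; exact ht)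
    exact tendsto_const_nhds.congr' hev.symm
  rw [integral_Ici_eq_integral_Ioi]
  have hmain := integral_Ioi_of_hasDerivAt_of_tendsto' (f := φ) (f' := ψ) (a := 0) (m := 0)
    (fun t _ => hder t) hint htend
  have hφ00 : φ 0 = f c := by simp [hφ]
  rw [show (∫ t in Ioi (0:ℝ), fderiv ℝ f (c + t • (Pi.single j 1 : Fin (n+1) → ℝ)) ((Pi.single j 1 : Fin (n+1) → ℝ)))
      = ∫ t in Ioi (0:ℝ), ψ t from rfl, hmain, hφ00, zero_sub]

end helpers

section keyA

lemma insertHomeo_apply {n : ℕ} (j : Fin (n+1)) (p : ℝ × (Fin n → ℝ)) :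
    insertHomeo j p = (j.insertNth p.1 p.2 : Fin (n+1) → ℝ) := rfl

lemma keyA {n : ℕ} (f : (Fin (n+1) → ℝ) → ℝ) (hf : ContDiff ℝ 1 f)
    (hfc : HasCompactSupport f) (j : Fin (n+1)) (y : Fin (n+1) → ℝ) :
    ∫ w in {w : Fin (n+1) → ℝ | ∀ i, 0 ≤ w i},
        fderiv ℝ f (y + w) ((Pi.single j 1 : Fin (n+1) → ℝ))
      = -∫ v in {v : Fin n → ℝ | ∀ i, 0 ≤ v i},
          f (y + (j.insertNth 0 v : Fin (n+1) → ℝ)) := by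
  set u : Fin (n+1) → ℝ := Pi.single j 1 with hu
  set e := MeasurableEquiv.piFinSuccAbove (fun _ : Fin (n+1) => ℝ) j with he
  have hmp : MeasurePreserving e volume volume := volume_preserving_piFinSuccAbove _ j
  set Kn : Set (Fin n → ℝ) := {v | ∀ i, 0 ≤ v i} with hKn
  set s : Set (ℝ × (Fin n → ℝ)) := Ici (0:ℝ) ×ˢ Kn with hs
  set gp : ℝ × (Fin n → ℝ) → ℝ :=
    fun p => fderiv ℝ f (y + (j.insertNth p.1 p.2 : Fin (n+1) → ℝ)) u with hgp
  have hKpre : {w : Fin (n+1) → ℝ | ∀ i, 0 ≤ w i} = e ⁻¹' s := by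
    ext w
    simp only [mem_setOf_eq, mem_preimage, hs, mem_prod, mem_Ici, he,
      MeasurableEquiv.piFinSuccAbove_apply, Fin.insertNthEquiv, Equiv.coe_fn_symm_mk,
      hKn]
    exact Fin.forall_iff_succAbove j
  have hcomp : ∀ w : Fin (n+1) → ℝ, gp (e w) = fderiv ℝ f (y + w) u := by
    intro w
    have : (j.insertNth (e w).1 (e w).2 : Fin (n+1) → ℝ) = w := by
      simp [he, MeasurableEquiv.piFinSuccAbove_apply, Fin.insertNthEquiv]
    rw [hgp]; simp only [this]
  have step1 : ∫ w in {w : Fin (n+1) → ℝ | ∀ i, 0 ≤ w i}, fderiv ℝ f (y + w) u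
      = ∫ p in s, gp p := by
    rw [hKpre, ← hmp.setIntegral_preimage_emb e.measurableEmbedding gp s]
    refine setIntegral_congr_fun (e.measurable ?_) (fun w _ => (hcomp w).symm)
    apply MeasurableSet.prod measurableSet_Ici
    have : Kn = ⋂ i, {v : Fin n → ℝ | 0 ≤ v i} := by ext; simp [hKn]
    rw [this]
    exact MeasurableSet.iInter fun i =>
      measurableSet_le measurable_const (measurable_pi_apply i)
  -- continuity and compact support of gp
  have hcont_gp : Continuous gp := by
    refine Continuous.clm_apply ?_ continuous_const
    exact (hf.continuous_fderiv one_ne_zero).comp (continuous_const.add (cont_insert j))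
  have hcs_gp : HasCompactSupport gp := by
    have h1 : HasCompactSupport (fun x : Fin (n+1) → ℝ => fderiv ℝ f x u) :=
      hfc.fderiv_apply ℝ u
    have h2 := h1.comp_homeomorph ((insertHomeo j).trans (Homeomorph.addLeft y))
    have : gp = (fun x : Fin (n+1) → ℝ => fderiv ℝ f x u) ∘
        ((insertHomeo j).trans (Homeomorph.addLeft y)) := by
      funext p
      rfl
    rw [this]; exact h2
  have hint : Integrable gp (volume : Measure (ℝ × (Fin n → ℝ))) :=
    hcont_gp.integrable_of_hasCompactSupport hcs_gp
  have hint2 : Integrable gp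
      (((volume : Measure ℝ).restrict (Ici 0)).prod
        ((volume : Measure (Fin n → ℝ)).restrict Kn)) := by
    rw [Measure.prod_restrict, ← Measure.volume_eq_prod]
    exact hint.restrict
  have step2 : ∫ p in s, gp p = ∫ v in Kn, ∫ t in Ici (0:ℝ), gp (t, v) := by
    rw [hs, Measure.volume_eq_prod, ← Measure.prod_restrict]
    exact integral_prod_symm gp hint2
  have step3 : ∀ v : Fin n → ℝ,
      ∫ t in Ici (0:ℝ), gp (t, v) = - f (y + (j.insertNth 0 v : Fin (n+1) → ℝ)) := by
    intro v
    have hrw : ∀ t : ℝ, gp (t, v)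
        = fderiv ℝ f ((y + (j.insertNth 0 v : Fin (n+1) → ℝ)) + t • u) u := by
      intro t; rw [hgp]; beta_reduce; rw [insert_decomp j y v t]
    calc ∫ t in Ici (0:ℝ), gp (t, v)
        = ∫ t in Ici (0:ℝ),
            fderiv ℝ f ((y + (j.insertNth 0 v : Fin (n+1) → ℝ)) + t • u) u := by
          exact integral_congr_ae (Eventually.of_forall fun t => hrw t)
      _ = - f (y + (j.insertNth 0 v : Fin (n+1) → ℝ)) :=
          line_integral f hf hfc j _
  rw [step1, step2]
  rw [integral_congr_ae (Eventually.of_forall fun v => step3 v)]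
  rw [integral_neg]

end keyA

lemma gderiv {d : ℕ} (q : (Fin d → ℝ) → ℝ) (hq : ContDiff ℝ (⊤ : ℕ∞) q) (hqc : HasCompactSupport q)
    (g : (Fin d → ℝ) → ℝ)
    (hg : ∀ y, g y = ∫ z in {z : Fin d → ℝ | ∀ i, y i ≤ z i}, q z)
    (y : Fin d → ℝ) (u : Fin d → ℝ) :
    fderiv ℝ g y u
      = ∫ w in {w : Fin d → ℝ | ∀ i, 0 ≤ w i}, fderiv ℝ q (y + w) u := by
  set K : Set (Fin d → ℝ) := {w | ∀ i, 0 ≤ w i} with hK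
  set μ : Measure (Fin d → ℝ) := volume.restrict K with hμ
  have hgrew : g = fun x => ∫ w in K, q (x + w) := by
    funext x; rw [hg x, pareto_shift]
  obtain ⟨C, hC⟩ := (hqc.fderiv (𝕜 := ℝ)).exists_bound_of_continuous
    (hq.continuous_fderiv (by simp))
  obtain ⟨R, hR⟩ := (hqc.fderiv (𝕜 := ℝ)).isBounded.subset_closedBall 0
  set T : Set (Fin d → ℝ) := Metric.closedBall 0 (R + ‖y‖ + 1) with hT
  have hdiff : ∀ (w x : Fin d → ℝ),
      HasFDerivAt (fun x => q (x + w)) (fderiv ℝ q (x + w)) x := by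
    intro w x
    have h1 : HasFDerivAt q (fderiv ℝ q (x + w)) (x + w) :=
      (hq.differentiable (by simp) (x + w)).hasFDerivAt
    have h2 : HasFDerivAt (fun x : Fin d → ℝ => x + w)
        (ContinuousLinearMap.id ℝ (Fin d → ℝ)) x := (hasFDerivAt_id x).add_const w
    have h3 := h1.comp x h2
    simpa [Function.comp_def] using h3
  have hbound : ∀ᵐ w ∂μ, ∀ x ∈ Metric.ball y 1,
      ‖fderiv ℝ q (x + w)‖ ≤ T.indicator (fun _ => C) w := by
    refine Eventually.of_forall fun w => fun x hx => ?_
    by_cases hw : w ∈ T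
    · rw [indicator_of_mem hw]; exact hC _
    · rw [indicator_of_notMem hw]
      have hwnorm : R + ‖y‖ + 1 < ‖w‖ := by
        rw [hT, Metric.mem_closedBall, dist_zero_right, not_le] at hw; exact hw
      have hxnorm : ‖x‖ < ‖y‖ + 1 := by
        rw [Metric.mem_ball] at hx
        calc ‖x‖ ≤ ‖x - y‖ + ‖y‖ := by
              simpa using norm_add_le (x - y) y
          _ < 1 + ‖y‖ := by rw [← dist_eq_norm] at *; linarith
          _ = ‖y‖ + 1 := by ring
      have hnot : x + w ∉ tsupport (fderiv ℝ q) := by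
        intro hmem
        have h4 := hR hmem
        rw [Metric.mem_closedBall, dist_zero_right] at h4
        have h5 : ‖w‖ ≤ ‖x + w‖ + ‖x‖ := by
          calc ‖w‖ = ‖(x + w) - x‖ := by congr 1; abel
            _ ≤ ‖x + w‖ + ‖x‖ := norm_sub_le _ _
        linarith
      rw [image_eq_zero_of_notMem_tsupport hnot]
      simp
  have hbint : Integrable (T.indicator fun _ => C) μ := by
    rw [integrable_indicator_iff (by rw [hT]; exact measurableSet_closedBall)]
    refine integrableOn_const (ne_of_lt ?_)
    calc μ T = volume (T ∩ K) := by
          rw [hμ, Measure.restrict_apply (by rw [hT]; exact measurableSet_closedBall)]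
      _ ≤ volume T := measure_mono inter_subset_left
      _ < ⊤ := by rw [hT]; exact measure_closedBall_lt_top
  have hFmeas : ∀ᶠ x in 𝓝 y, AEStronglyMeasurable (fun w => q (x + w)) μ := by
    refine Eventually.of_forall fun x => ?_
    exact (hq.continuous.comp (continuous_const.add continuous_id)).aestronglyMeasurable
  have hFint : Integrable (fun w => q (y + w)) μ := by
    refine Integrable.restrict ?_
    exact ((hq.continuous.comp (continuous_const.add continuous_id)).integrable_of_hasCompactSupport
      (hqc.comp_homeomorph (Homeomorph.addLeft y)))
  have hF'cont : Continuous (fun w : Fin d → ℝ => fderiv ℝ q (y + w)) :=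
    (hq.continuous_fderiv (by simp)).comp (continuous_const.add continuous_id)
  have hF'meas : AEStronglyMeasurable (fun w : Fin d → ℝ => fderiv ℝ q (y + w)) μ :=
    hF'cont.aestronglyMeasurable
  have key := hasFDerivAt_integral_of_dominated_of_fderiv_le (𝕜 := ℝ)
    (F := fun (x w : Fin d → ℝ) => q (x + w))
    (F' := fun x w => fderiv ℝ q (x + w)) (x₀ := y)
    (bound := T.indicator fun _ => C) (μ := μ) (s := Metric.ball y 1) (Metric.ball_mem_nhds y one_pos)
    hFmeas hFint hF'meas hbound hbint
    (Eventually.of_forall fun w => fun x _ => hdiff w x)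
  have hfd : fderiv ℝ g y = ∫ w, fderiv ℝ q (y + w) ∂μ := by
    rw [hgrew]; exact key.fderiv
  have hintF' : Integrable (fun w : Fin d → ℝ => fderiv ℝ q (y + w)) μ := by
    refine Integrable.restrict ?_
    exact hF'cont.integrable_of_hasCompactSupport
      ((hqc.fderiv (𝕜 := ℝ)).comp_homeomorph (Homeomorph.addLeft y))
  rw [hfd, ContinuousLinearMap.integral_apply hintF' u]

/-- for the first-order operator `Lφ = Σ_j b_j(x_j) ∂φ/∂x_j` with coefficients
`b_j ∈ C¹(ℝ)` each depending only on its own coordinate, a smooth compactly supported density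
`q`, and Pareto survival function `g(y) = ∫_{z ≥ y} q(z) dz`, the Pareto-dual operator
`L^D g = F(L'(F⁻¹ g))`, with `F⁻¹ g = q` (so `F(L' q)(y) = ∫_{z ≥ y} (L'q)(z) dz`,
`L'q = −Σ_j ∂(b_j q)/∂x_j`), satisfies `L^D g(y) = −Σ_j b_j(y_j) ∂g/∂y_j (y)`. -/
theorem stmt9 {d : ℕ} (b : Fin d → ℝ → ℝ) (hb : ∀ j, ContDiff ℝ 1 (b j))
    (q : (Fin d → ℝ) → ℝ) (hq : ContDiff ℝ (⊤ : ℕ∞) q) (hqc : HasCompactSupport q)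
    (hq0 : ∀ x, 0 ≤ q x)
    (g : (Fin d → ℝ) → ℝ)
    (hg : ∀ y, g y = ∫ z in {z : Fin d → ℝ | ∀ i, y i ≤ z i}, q z) :
    ∀ y : Fin d → ℝ,
      (∫ z in {z : Fin d → ℝ | ∀ i, y i ≤ z i},
          -∑ j, fderiv ℝ (fun x => b j (x j) * q x) z (Pi.single j 1)) =
        -∑ j, b j (y j) * fderiv ℝ g y (Pi.single j 1) := by
  intro y
  cases d with
  | zero => simp
  | succ n =>
    set S : Set (Fin (n+1) → ℝ) := {z | ∀ i, y i ≤ z i} with hS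
    have hfj : ∀ j : Fin (n+1),
        ContDiff ℝ 1 (fun x : Fin (n+1) → ℝ => b j (x j) * q x) := by
      intro j
      exact ((hb j).comp
        (ContinuousLinearMap.proj j : (Fin (n+1) → ℝ) →L[ℝ] ℝ).contDiff).mul
        (hq.of_le (by simp))
    have hfjc : ∀ j : Fin (n+1),
        HasCompactSupport (fun x : Fin (n+1) → ℝ => b j (x j) * q x) := by
      intro j
      exact hqc.mul_left
    have hint : ∀ j : Fin (n+1), IntegrableOn
        (fun z => fderiv ℝ (fun x => b j (x j) * q x) z (Pi.single j 1)) S volume := by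
      intro j
      refine Integrable.integrableOn ?_
      have hcont : Continuous fun z =>
          fderiv ℝ (fun x : Fin (n+1) → ℝ => b j (x j) * q x) z (Pi.single j 1) :=
        ((hfj j).continuous_fderiv one_ne_zero).clm_apply continuous_const
      exact hcont.integrable_of_hasCompactSupport ((hfjc j).fderiv_apply ℝ _)
    have hterm : ∀ j : Fin (n+1),
        (∫ z in S, fderiv ℝ (fun x : Fin (n+1) → ℝ => b j (x j) * q x) z (Pi.single j 1))
          = b j (y j) * fderiv ℝ g y (Pi.single j 1) := by
      intro j
      have h1 := pareto_shift
        (fun z => fderiv ℝ (fun x : Fin (n+1) → ℝ => b j (x j) * q x) z (Pi.single j 1)) y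
      have h2 := keyA _ (hfj j) (hfjc j) j y
      have h3 : ∀ v : Fin n → ℝ,
          (fun x : Fin (n+1) → ℝ => b j (x j) * q x) (y + (j.insertNth 0 v : Fin (n+1) → ℝ))
            = b j (y j) * q (y + (j.insertNth 0 v : Fin (n+1) → ℝ)) := by
        intro v
        have hc : (y + (j.insertNth 0 v : Fin (n+1) → ℝ)) j = y j := by
          simp [Fin.insertNth_apply_same]
        simp only [hc]
      have h4 := gderiv q hq hqc g hg y (Pi.single j 1)
      have h5 := keyA q (hq.of_le (by simp)) hqc j y
      rw [hS, h1, h2, h4, h5, integral_congr_ae (Eventually.of_forall h3),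
        integral_const_mul]
      ring
    rw [integral_neg, integral_finset_sum _ (fun j _ => hint j)]
    congr 1
    exact Finset.sum_congr rfl (fun j _ => hterm j)
end

section
/- Let ν(x,dw) be a bounded stochastic kernel on ℝ, smooth in x, and L the jump generator Lφ(x) = ∫(φ(w)−φ(x))ν(x,dw). For q ∈ C_c^∞(ℝ) with survival function g(y) = ∫_y^∞ q, the Pareto-dual operator satisfies L^D g(y) = ∫_{−∞}^y g(z) dz ∫_{w≥y} (∂ν/∂z)(z,dw) − ∫_y^∞ g(z) dz ∫_{w<y} (∂ν/∂z)(z,dw) − g(y) ∫ ν(y,dw), where L^D g := F(L'(F⁻¹g)), F⁻¹g = −g', (L'q)(dz) = ∫ q(x)ν(x,dz)dx − q(z)(∫ν(z,dw))dz, and Fμ(y) = μ([y,∞)). -/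
open MeasureTheory Filter Topology
open scoped ENNReal

/-- for a bounded stochastic kernel `ν(x,dw)` on `ℝ`, smooth in `x` (with
bounded derivative kernel), and `q ∈ C_c^∞(ℝ)` with survival function `g(y) = ∫_y^∞ q`, the
Pareto-dual jump operator `L^D g = F(L'(F⁻¹g))` (with `F⁻¹g = −g' = q`,
`(L'q)(dz) = ∫ q(x) ν(x,dz) dx − q(z)(∫ν(z,dw)) dz`, `Fμ(y) = μ([y,∞))`) satisfies
`L^D g(y) = ∫_{−∞}^y g(z) dz ∫_{w≥y} ∂ν/∂z (z,dw) − ∫_y^∞ g(z) dz ∫_{w<y} ∂ν/∂z (z,dw)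
  − g(y) ∫ ν(y,dw)`, all boundary terms at `±∞` vanishing. -/
theorem stmt13 (ν : ℝ → Measure ℝ)
    (hfin : ∀ x, IsFiniteMeasure (ν x))
    (hbd : ∃ C : ℝ≥0∞, C ≠ ⊤ ∧ ∀ x, ν x Set.univ ≤ C)
    (hsm : ∀ A : Set ℝ, MeasurableSet A → ContDiff ℝ (⊤ : ℕ∞) fun z => (ν z A).toReal)
    (hdb : ∃ C, ∀ (A : Set ℝ), MeasurableSet A →
      ∀ z, |deriv (fun u => (ν u A).toReal) z| ≤ C)
    (hdecay1 : ∀ y, Tendsto (fun z => (ν z (Set.Ici y)).toReal) atBot (𝓝 0))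
    (hdecay2 : ∀ y, Tendsto (fun z => (ν z (Set.Iio y)).toReal) atTop (𝓝 0))
    (hint1 : ∀ y, IntegrableOn
      (fun z => deriv (fun u => (ν u (Set.Ici y)).toReal) z) (Set.Iic y))
    (hint2 : ∀ y, IntegrableOn
      (fun z => deriv (fun u => (ν u (Set.Iio y)).toReal) z) (Set.Ici y))
    (q : ℝ → ℝ) (hq : ContDiff ℝ (⊤ : ℕ∞) q) (hqc : HasCompactSupport q) (hq0 : ∀ x, 0 ≤ q x)
    (g : ℝ → ℝ) (hg : ∀ y, g y = ∫ z in Set.Ici y, q z) :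
    ∀ y, (∫ x, q x * (ν x (Set.Ici y)).toReal) -
        (∫ z in Set.Ici y, q z * (ν z Set.univ).toReal) =
      (∫ z in Set.Iic y, g z * deriv (fun u => (ν u (Set.Ici y)).toReal) z) -
        (∫ z in Set.Ici y, g z * deriv (fun u => (ν u (Set.Iio y)).toReal) z) -
        g y * (ν y Set.univ).toReal := by
  intro y
  have qcont : Continuous q := hq.continuous
  have qint : Integrable q := qcont.integrable_of_hasCompactSupport hqc
  -- representation of g and its derivative
  have hgrep : ∀ u, g u = ((∫ z, q z) - ∫ z in Set.Iic 0, q z) - ∫ z in (0:ℝ)..u, q z := by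
    intro u
    have h1 : (∫ z in Set.Iic u, q z) + ∫ z in Set.Ioi u, q z = ∫ z, q z := by
      simpa [Set.compl_Iic] using integral_add_compl measurableSet_Iic qint (f := q)
    have h2 : (∫ z in Set.Iic u, q z) - ∫ z in Set.Iic 0, q z = ∫ z in (0:ℝ)..u, q z :=
      intervalIntegral.integral_Iic_sub_Iic qint.integrableOn qint.integrableOn
    rw [hg u, MeasureTheory.integral_Ici_eq_integral_Ioi]
    linarith
  have hgd : ∀ u, HasDerivAt g (-q u) u := by
    intro u
    have h : HasDerivAt (fun v => ∫ z in (0:ℝ)..v, q z) (q u) u :=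
      intervalIntegral.integral_hasDerivAt_right
        (qint.intervalIntegrable)
        (qcont.stronglyMeasurable.stronglyMeasurableAtFilter)
        (qcont.continuousAt)
    have h' : HasDerivAt (fun v => ((∫ z, q z) - ∫ z in Set.Iic 0, q z)
        - ∫ z in (0:ℝ)..v, q z) (-q u) u := by
      simpa using (h.const_sub ((∫ z, q z) - ∫ z in Set.Iic 0, q z))
    exact h'.congr_of_eventuallyEq
      (Filter.Eventually.of_forall fun v => (hgrep v))
  have gcont : Continuous g := by
    apply continuous_iff_continuousAt.2 fun u => (hgd u).continuousAt
  -- bounds on g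
  set M : ℝ := ∫ z, q z with hM
  have hgnn : ∀ u, 0 ≤ g u := by
    intro u; rw [hg u]
    exact setIntegral_nonneg measurableSet_Ici fun x _ => hq0 x
  have hgle : ∀ u, g u ≤ M := by
    intro u; rw [hg u]
    exact setIntegral_le_integral qint (Filter.Eventually.of_forall hq0)
  have hgabs : ∀ u, |g u| ≤ M := fun u => by
    rw [abs_of_nonneg (hgnn u)]; exact hgle u
  -- the two kernel mass functions
  set A : ℝ → ℝ := fun z => (ν z (Set.Ici y)).toReal with hA
  set B : ℝ → ℝ := fun z => (ν z (Set.Iio y)).toReal with hB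
  have hAc : ContDiff ℝ (⊤ : ℕ∞) A := hsm _ measurableSet_Ici
  have hBc : ContDiff ℝ (⊤ : ℕ∞) B := hsm _ measurableSet_Iio
  have hAd : ∀ z, HasDerivAt A (deriv A z) z :=
    fun z => (hAc.differentiable (by simp) z).hasDerivAt
  have hBd : ∀ z, HasDerivAt B (deriv B z) z :=
    fun z => (hBc.differentiable (by simp) z).hasDerivAt
  have hAnn : ∀ z, 0 ≤ A z := fun z => ENNReal.toReal_nonneg
  have hBnn : ∀ z, 0 ≤ B z := fun z => ENNReal.toReal_nonneg
  -- integrability of q·A and q·B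
  have hqA : Integrable (fun z => q z * A z) := by
    have hs : HasCompactSupport (fun z => q z * A z) := HasCompactSupport.mul_right hqc
    exact (qcont.mul hAc.continuous).integrable_of_hasCompactSupport hs
  have hqB : Integrable (fun z => q z * B z) := by
    have hs : HasCompactSupport (fun z => q z * B z) := HasCompactSupport.mul_right hqc
    exact (qcont.mul hBc.continuous).integrable_of_hasCompactSupport hs
  -- integrability of g·A' and g·B'
  have hgA' : IntegrableOn (fun z => g z * deriv A z) (Set.Iic y) :=
    (hint1 y).bdd_mul (c := M) (gcont.aestronglyMeasurable.restrict) (Filter.Eventually.of_forall fun u => hgabs u)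
  have hgB' : IntegrableOn (fun z => g z * deriv B z) (Set.Ici y) :=
    (hint2 y).bdd_mul (c := M) (gcont.aestronglyMeasurable.restrict) (Filter.Eventually.of_forall fun u => hgabs u)
  have hgB'' : IntegrableOn (fun z => g z * deriv B z) (Set.Ioi y) :=
    hgB'.mono_set Set.Ioi_subset_Ici_self
  -- boundary limits
  have hlim1 : Tendsto (fun z => g z * A z) atBot (𝓝 0) := by
    apply squeeze_zero_norm (a := fun z => M * A z)
    · intro z
      have : ‖g z * A z‖ = |g z| * A z := by
        rw [norm_mul, Real.norm_eq_abs, Real.norm_eq_abs, abs_of_nonneg (hAnn z)]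
      rw [this]
      exact mul_le_mul_of_nonneg_right (hgabs z) (hAnn z)
    · simpa using (hdecay1 y).const_mul M
  have hlim2 : Tendsto (fun z => g z * B z) atTop (𝓝 0) := by
    apply squeeze_zero_norm (a := fun z => M * B z)
    · intro z
      have : ‖g z * B z‖ = |g z| * B z := by
        rw [norm_mul, Real.norm_eq_abs, Real.norm_eq_abs, abs_of_nonneg (hBnn z)]
      rw [this]
      exact mul_le_mul_of_nonneg_right (hgabs z) (hBnn z)
    · simpa using (hdecay2 y).const_mul M
  -- product derivatives
  have hprodA : ∀ z, HasDerivAt (fun u => g u * A u) (-q z * A z + g z * deriv A z) z :=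
    fun z => (hgd z).mul (hAd z)
  have hprodB : ∀ z, HasDerivAt (fun u => g u * B u) (-q z * B z + g z * deriv B z) z :=
    fun z => (hgd z).mul (hBd z)
  -- integrability of the product derivatives
  have hqAneg : IntegrableOn (fun z => -q z * A z) (Set.Iic y) := by
    have h : IntegrableOn (fun z => q z * A z) (Set.Iic y) := hqA.integrableOn
    exact h.neg.congr (Filter.Eventually.of_forall fun z => by simp [neg_mul])
  have hqBneg : IntegrableOn (fun z => -q z * B z) (Set.Ioi y) := by
    have h : IntegrableOn (fun z => q z * B z) (Set.Ioi y) := hqB.integrableOn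
    exact h.neg.congr (Filter.Eventually.of_forall fun z => by simp [neg_mul])
  have hintA : IntegrableOn (fun z => -q z * A z + g z * deriv A z) (Set.Iic y) :=
    hqAneg.add hgA'
  have hintB : IntegrableOn (fun z => -q z * B z + g z * deriv B z) (Set.Ioi y) :=
    hqBneg.add hgB''
  -- FTC on (-∞, y]
  have ftc1 : ∫ z in Set.Iic y, (-q z * A z + g z * deriv A z) = g y * A y - 0 :=
    integral_Iic_of_hasDerivAt_of_tendsto'
      (fun x _ => hprodA x) hintA hlim1
  -- FTC on (y, ∞)
  have ftc2 : ∫ z in Set.Ioi y, (-q z * B z + g z * deriv B z) = 0 - g y * B y :=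
    integral_Ioi_of_hasDerivAt_of_tendsto'
      (fun x _ => hprodB x) hintB hlim2
  -- split the integrals
  have split1 : ∫ z in Set.Iic y, (-q z * A z + g z * deriv A z)
      = (∫ z in Set.Iic y, -q z * A z) + ∫ z in Set.Iic y, g z * deriv A z :=
    integral_add hqAneg hgA'
  have split2 : ∫ z in Set.Ioi y, (-q z * B z + g z * deriv B z)
      = (∫ z in Set.Ioi y, -q z * B z) + ∫ z in Set.Ioi y, g z * deriv B z :=
    integral_add hqBneg hgB''
  have neg1 : ∫ z in Set.Iic y, -q z * A z = -∫ z in Set.Iic y, q z * A z := by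
    simp [neg_mul, integral_neg]
  have neg2 : ∫ z in Set.Ioi y, -q z * B z = -∫ z in Set.Ioi y, q z * B z := by
    simp [neg_mul, integral_neg]
  -- full-line splitting of ∫ qA
  have e3 : (∫ z, q z * A z) = (∫ z in Set.Iic y, q z * A z) + ∫ z in Set.Ioi y, q z * A z := by
    simpa [Set.compl_Iic] using
      (integral_add_compl measurableSet_Iic hqA (f := fun z => q z * A z)).symm
  -- total mass splits
  have hT : ∀ z, (ν z Set.univ).toReal = B z + A z := by
    intro z
    haveI := hfin z
    have hu : ν z (Set.Iio y) + ν z (Set.Ici y) = ν z Set.univ := by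
      rw [← measure_union (Set.Iio_disjoint_Ici le_rfl) measurableSet_Ici,
        Set.Iio_union_Ici]
    rw [← hu, ENNReal.toReal_add (measure_ne_top _ _) (measure_ne_top _ _)]
  have e4 : (∫ z in Set.Ici y, q z * (ν z Set.univ).toReal)
      = (∫ z in Set.Ici y, q z * B z) + ∫ z in Set.Ici y, q z * A z := by
    rw [← integral_add hqB.integrableOn hqA.integrableOn]
    congr 1
    funext z
    rw [hT z]; ring
  have e5a : (∫ z in Set.Ici y, q z * A z) = ∫ z in Set.Ioi y, q z * A z :=
    MeasureTheory.integral_Ici_eq_integral_Ioi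
  have e5b : (∫ z in Set.Ici y, q z * B z) = ∫ z in Set.Ioi y, q z * B z :=
    MeasureTheory.integral_Ici_eq_integral_Ioi
  have e5c : (∫ z in Set.Ici y, g z * deriv B z) = ∫ z in Set.Ioi y, g z * deriv B z :=
    MeasureTheory.integral_Ici_eq_integral_Ioi
  -- assemble
  have E1 : (∫ z in Set.Iic y, q z * A z)
      = (∫ z in Set.Iic y, g z * deriv A z) - g y * A y := by
    rw [split1, neg1] at ftc1; linarith
  have E2 : (∫ z in Set.Ioi y, q z * B z)
      = (∫ z in Set.Ioi y, g z * deriv B z) + g y * B y := by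
    rw [split2, neg2] at ftc2; linarith
  have hTy : (ν y Set.univ).toReal = B y + A y := hT y
  rw [e3, e4, e5a, e5b, e5c, E1, E2, hTy]
  ring
end

section
/- Under the additional decay conditions lim_{z→−∞} ∫_{w≥y} ν(z,dw) = 0 and lim_{z→+∞} ∫_{w<y} ν(z,dw) = 0 for all y, the one-dimensional dual jump operator rewrites in conservative form: L^D g(y) = ∫_{−∞}^y (g(z)−g(y)) dz ∫_{w≥y} (∂ν/∂z)(z,dw) − ∫_y^∞ (g(z)−g(y)) dz ∫_{w<y} (∂ν/∂z)(z,dw). In particular L^D applied to constant functions gives zero. -/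
open MeasureTheory Filter Topology
open scoped ENNReal

/-- under the decay conditions `lim_{z→−∞} ∫_{w≥y} ν(z,dw) = 0` and
`lim_{z→+∞} ∫_{w<y} ν(z,dw) = 0`, the one-dimensional dual jump operator
`L^D g(y) = ∫_{−∞}^y g(z) dz ∫_{w≥y} ∂_zν(z,dw) − ∫_y^∞ g(z) dz ∫_{w<y} ∂_zν(z,dw)
  − g(y) ∫ν(y,dw)` rewrites in conservative form
`L^D g(y) = ∫_{−∞}^y (g(z)−g(y)) dz ∫_{w≥y} ∂_zν(z,dw)
  − ∫_y^∞ (g(z)−g(y)) dz ∫_{w<y} ∂_zν(z,dw)`; in particular `L^D` vanishes on constants. -/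
theorem stmt14 (ν : ℝ → Measure ℝ)
    (hfin : ∀ x, IsFiniteMeasure (ν x))
    (hbd : ∃ C : ℝ≥0∞, C ≠ ⊤ ∧ ∀ x, ν x Set.univ ≤ C)
    (hsm : ∀ A : Set ℝ, MeasurableSet A → ContDiff ℝ (⊤ : ℕ∞) fun z => (ν z A).toReal)
    (hdecay1 : ∀ y, Tendsto (fun z => (ν z (Set.Ici y)).toReal) atBot (𝓝 0))
    (hdecay2 : ∀ y, Tendsto (fun z => (ν z (Set.Iio y)).toReal) atTop (𝓝 0))
    (hint1 : ∀ y, IntegrableOn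
      (fun z => deriv (fun u => (ν u (Set.Ici y)).toReal) z) (Set.Iic y))
    (hint2 : ∀ y, IntegrableOn
      (fun z => deriv (fun u => (ν u (Set.Iio y)).toReal) z) (Set.Ici y))
    (g : ℝ → ℝ) (hgm : Measurable g) (hgb : ∃ C, ∀ x, |g x| ≤ C) :
    (∀ y,
      (∫ z in Set.Iic y, g z * deriv (fun u => (ν u (Set.Ici y)).toReal) z) -
        (∫ z in Set.Ici y, g z * deriv (fun u => (ν u (Set.Iio y)).toReal) z) -
        g y * (ν y Set.univ).toReal =
      (∫ z in Set.Iic y, (g z - g y) * deriv (fun u => (ν u (Set.Ici y)).toReal) z) -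
        ∫ z in Set.Ici y, (g z - g y) * deriv (fun u => (ν u (Set.Iio y)).toReal) z) ∧
    (∀ (cst : ℝ) (y : ℝ),
      (∫ z in Set.Iic y, cst * deriv (fun u => (ν u (Set.Ici y)).toReal) z) -
        (∫ z in Set.Ici y, cst * deriv (fun u => (ν u (Set.Iio y)).toReal) z) -
        cst * (ν y Set.univ).toReal = 0) := by
  -- Key FTC computations
  have key1 : ∀ y, (∫ z in Set.Iic y, deriv (fun u => (ν u (Set.Ici y)).toReal) z)
      = (ν y (Set.Ici y)).toReal := by
    intro y
    have := integral_Iic_of_hasDerivAt_of_tendsto'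
      (f := fun u => (ν u (Set.Ici y)).toReal)
      (f' := fun z => deriv (fun u => (ν u (Set.Ici y)).toReal) z) (a := y) (m := 0)
      (fun x _ => ((hsm _ measurableSet_Ici).differentiable (by simp) x).hasDerivAt)
      (hint1 y) (hdecay1 y)
    simpa using this
  have key2 : ∀ y, (∫ z in Set.Ici y, deriv (fun u => (ν u (Set.Iio y)).toReal) z)
      = -(ν y (Set.Iio y)).toReal := by
    intro y
    rw [MeasureTheory.integral_Ici_eq_integral_Ioi]
    have := integral_Ioi_of_hasDerivAt_of_tendsto'
      (f := fun u => (ν u (Set.Iio y)).toReal)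
      (f' := fun z => deriv (fun u => (ν u (Set.Iio y)).toReal) z) (a := y) (m := 0)
      (fun x _ => ((hsm _ measurableSet_Iio).differentiable (by simp) x).hasDerivAt)
      ((hint2 y).mono Set.Ioi_subset_Ici_self le_rfl) (hdecay2 y)
    simpa using this
  have huniv : ∀ y, (ν y Set.univ).toReal
      = (ν y (Set.Iio y)).toReal + (ν y (Set.Ici y)).toReal := by
    intro y
    have := hfin y
    rw [← Set.Iio_union_Ici (a := y),
      measure_union (Set.Iio_disjoint_Ici le_rfl) measurableSet_Ici,
      ENNReal.toReal_add (measure_ne_top _ _) (measure_ne_top _ _)]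
  constructor
  · intro y
    obtain ⟨C, hC⟩ := hgb
    have hI1 : Integrable (fun z => g z * deriv (fun u => (ν u (Set.Ici y)).toReal) z)
        (volume.restrict (Set.Iic y)) := by
      refine (hint1 y).bdd_mul (c := C) (hgm.aestronglyMeasurable) (ae_of_all _ fun x => ?_)
      simpa [Real.norm_eq_abs] using hC x
    have hI2 : Integrable (fun z => g z * deriv (fun u => (ν u (Set.Iio y)).toReal) z)
        (volume.restrict (Set.Ici y)) := by
      refine (hint2 y).bdd_mul (c := C) (hgm.aestronglyMeasurable) (ae_of_all _ fun x => ?_)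
      simpa [Real.norm_eq_abs] using hC x
    have e1 : (∫ z in Set.Iic y, (g z - g y) * deriv (fun u => (ν u (Set.Ici y)).toReal) z)
        = (∫ z in Set.Iic y, g z * deriv (fun u => (ν u (Set.Ici y)).toReal) z)
          - g y * (ν y (Set.Ici y)).toReal := by
      simp_rw [sub_mul]
      rw [integral_sub hI1 ((hint1 y).const_mul (g y)), integral_const_mul, key1]
    have e2 : (∫ z in Set.Ici y, (g z - g y) * deriv (fun u => (ν u (Set.Iio y)).toReal) z)
        = (∫ z in Set.Ici y, g z * deriv (fun u => (ν u (Set.Iio y)).toReal) z)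
          + g y * (ν y (Set.Iio y)).toReal := by
      simp_rw [sub_mul]
      rw [integral_sub hI2 ((hint2 y).const_mul (g y)), integral_const_mul, key2]
      ring
    rw [e1, e2, huniv y]; ring
  · intro cst y
    rw [integral_const_mul, integral_const_mul, key1, key2, huniv y]; ring
end
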